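/- arXiv:2411.09637 — 6 statements merged into one kernel-verified Lean document; each statement's English description precedes it below -/
import Mathlib

section
/- Let P be an orthogonal projection on a finite-dimensional complex Hilbert space H with codespace C = range(P), let {E_i}_{i∈I} be a finite family of operators with a sign function s : I → {+1,−1}, and suppose E[P] := Σ_i s(i) E_i P E_i† is positive definite. Define R_i := P E_i† E[P]^{−1/2}, and suppose P E_i† E[P]^{−1/2} E_j P = β_{ij} P + Δ_{ij} with β_{ij} ∈ ℂ and P Δ_{ij} P = Δ_{ij}, Tr(Δ_{ij}) = 0. Then for every unit vector ψ ∈ C, the fidelity of the state recovered by the Petz map is ⟨ψ, ( Σ_{i,j} s(i) s(j) R_j E_i |ψ⟩⟨ψ| E_i† R_j† ) ψ⟩ = Σ_{i,j} s(i) s(j) | β_{ij} + ⟨ψ, Δ_{ij} ψ⟩ |². -/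
open Matrix BigOperators
open scoped ComplexOrder

/-- The positive semidefinite square root of a positive semidefinite matrix
(removed from Mathlib; restored here with its former definition). -/
noncomputable def Matrix.PosSemidef.sqrt {n 𝕜 : Type*} [Fintype n] [DecidableEq n] [RCLike 𝕜]
    {A : Matrix n n 𝕜} (hA : A.PosSemidef) : Matrix n n 𝕜 :=
  hA.1.eigenvectorUnitary.1 * diagonal ((↑) ∘ (√·) ∘ hA.1.eigenvalues) *
  (star hA.1.eigenvectorUnitary : Matrix n n 𝕜)

lemma vecMulVec_mulVec_aux {n : Type*} [Fintype n] (w v x : n → ℂ) :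
    Matrix.vecMulVec w v *ᵥ x = (v ⬝ᵥ x) • w := by
  ext i
  simp only [Matrix.mulVec, dotProduct, Matrix.vecMulVec_apply, Pi.smul_apply,
    smul_eq_mul, Finset.sum_mul]
  exact Finset.sum_congr rfl fun k _ => by ring

lemma sum_mulVec_aux {n I : Type*} [Fintype n] [Fintype I]
    (F : I → Matrix n n ℂ) (x : n → ℂ) :
    (∑ i : I, F i) *ᵥ x = ∑ i : I, F i *ᵥ x := by
  ext j
  simp only [Matrix.mulVec, dotProduct, Finset.sum_apply, Matrix.sum_apply,
    Finset.sum_mul]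
  rw [Finset.sum_comm]

lemma dot_sum_aux {n I : Type*} [Fintype n] [Fintype I]
    (x : n → ℂ) (f : I → (n → ℂ)) :
    x ⬝ᵥ (∑ i : I, f i) = ∑ i : I, x ⬝ᵥ f i := by
  simp only [dotProduct, Finset.sum_apply, Finset.mul_sum]
  rw [Finset.sum_comm]

/-- Fidelity of the state recovered by the (non-Markovian) Petz map:
`⟨ψ, (Σ_{i,j} s i s j R j E i |ψ⟩⟨ψ| (E i)† (R j)†) ψ⟩ = Σ_{i,j} s i s j |β_{ij} + ⟨ψ, Δ_{ij} ψ⟩|²`. -/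
theorem petz_recovered_fidelity
    {n I : Type*} [Fintype n] [DecidableEq n] [Fintype I]
    (P : Matrix n n ℂ) (hPherm : P.IsHermitian) (hPproj : P * P = P)
    (E : I → Matrix n n ℂ)
    (s : I → ℝ) (hs : ∀ i, s i = 1 ∨ s i = -1)
    (EP : Matrix n n ℂ)
    (hEPdef : EP = ∑ i : I, (s i : ℂ) • (E i * P * (E i)ᴴ))
    (hEP : EP.PosDef)
    (R : I → Matrix n n ℂ)
    (hR : ∀ i, R i = P * (E i)ᴴ * (hEP.posSemidef.sqrt)⁻¹)
    (β : I → I → ℂ) (Δ : I → I → Matrix n n ℂ)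
    (hΔsupp : ∀ i j, P * Δ i j * P = Δ i j)
    (hΔtr : ∀ i j, (Δ i j).trace = 0)
    (hAQEC : ∀ i j, P * (E i)ᴴ * (hEP.posSemidef.sqrt)⁻¹ * E j * P
        = β i j • P + Δ i j)
    (ψ : n → ℂ) (hψunit : star ψ ⬝ᵥ ψ = 1) (hψcode : P *ᵥ ψ = ψ) :
    star ψ ⬝ᵥ
      ((∑ i : I, ∑ j : I, ((s i : ℂ) * (s j : ℂ)) •
        (R j * E i * vecMulVec ψ (star ψ) * (E i)ᴴ * (R j)ᴴ)) *ᵥ ψ)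
    = ∑ i : I, ∑ j : I, (s i : ℂ) * (s j : ℂ) *
        ((‖β i j + star ψ ⬝ᵥ (Δ i j *ᵥ ψ)‖ ^ 2 : ℝ) : ℂ) := by
  have hMP : ∀ i j, R j * E i * P = β j i • P + Δ j i := by
    intro i j
    rw [hR]
    exact hAQEC j i
  have hc : ∀ i j, star ψ ⬝ᵥ ((R j * E i) *ᵥ ψ)
      = β j i + star ψ ⬝ᵥ (Δ j i *ᵥ ψ) := by
    intro i j
    have h1 : (R j * E i) *ᵥ ψ = (R j * E i * P) *ᵥ ψ := by
      conv_rhs => rw [← Matrix.mulVec_mulVec, hψcode]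
    rw [h1, hMP, Matrix.add_mulVec, Matrix.smul_mulVec, hψcode,
      dotProduct_add, dotProduct_smul, hψunit, smul_eq_mul, mul_one]
  have key : ∀ i j, star ψ ⬝ᵥ
      ((R j * E i * vecMulVec ψ (star ψ) * (E i)ᴴ * (R j)ᴴ) *ᵥ ψ)
      = ((‖β j i + star ψ ⬝ᵥ (Δ j i *ᵥ ψ)‖ ^ 2 : ℝ) : ℂ) := by
    intro i j
    obtain ⟨M, hM⟩ : ∃ M, M = R j * E i := ⟨_, rfl⟩
    have hassoc : R j * E i * vecMulVec ψ (star ψ) * (E i)ᴴ * (R j)ᴴ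
        = M * (vecMulVec ψ (star ψ) * Mᴴ) := by
      rw [hM, Matrix.conjTranspose_mul]
      noncomm_ring
    have hsplit : (M * (vecMulVec ψ (star ψ) * Mᴴ)) *ᵥ ψ
        = M *ᵥ (vecMulVec ψ (star ψ) *ᵥ (Mᴴ *ᵥ ψ)) := by
      simp only [Matrix.mulVec_mulVec]
    rw [hassoc, hsplit, vecMulVec_mulVec_aux]
    have hconj : star ψ ⬝ᵥ (Mᴴ *ᵥ ψ) = star (star ψ ⬝ᵥ (M *ᵥ ψ)) := by
      rw [Matrix.mulVec_conjTranspose, Matrix.dotProduct_star, star_star,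
        ← Matrix.dotProduct_mulVec]
    rw [Matrix.mulVec_smul, dotProduct_smul, hconj, hM, hc, smul_eq_mul]
    rw [Complex.star_def, ← Complex.normSq_eq_conj_mul_self, Complex.normSq_eq_norm_sq]
  calc star ψ ⬝ᵥ
      ((∑ i : I, ∑ j : I, ((s i : ℂ) * (s j : ℂ)) •
        (R j * E i * vecMulVec ψ (star ψ) * (E i)ᴴ * (R j)ᴴ)) *ᵥ ψ)
      = ∑ i : I, ∑ j : I, ((s i : ℂ) * (s j : ℂ)) *
          (star ψ ⬝ᵥ ((R j * E i * vecMulVec ψ (star ψ) * (E i)ᴴ * (R j)ᴴ) *ᵥ ψ)) := by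
        simp_rw [sum_mulVec_aux, dot_sum_aux, Matrix.smul_mulVec,
          dotProduct_smul, smul_eq_mul]
    _ = ∑ i : I, ∑ j : I, ((s i : ℂ) * (s j : ℂ)) *
          ((‖β j i + star ψ ⬝ᵥ (Δ j i *ᵥ ψ)‖ ^ 2 : ℝ) : ℂ) := by
        simp_rw [key]
    _ = _ := by
        rw [Finset.sum_comm]
        simp_rw [mul_comm ((s _ : ℂ)) ((s _ : ℂ))]
end

section
/- (Theorem 1, non-Markovian Petz recovery.) Let P be an orthogonal projection on a finite-dimensional complex Hilbert space H with codespace C = range(P), let {E_i}_{i∈I} be a finite family of operators with a sign function s : I → {+1,−1}, and suppose E[P] := Σ_i s(i) E_i P E_i† is positive definite. Define R_i := P E_i† E[P]^{−1/2} and suppose P E_i† E[P]^{−1/2} E_j P = β_{ij} P + Δ_{ij} with β_{ij} ∈ ℂ, P Δ_{ij} P = Δ_{ij} and Tr(Δ_{ij}) = 0, and that Σ_{i,j} s(i) s(j) P E_i† R_j† R_j E_i P = P. Then for every unit vector ψ ∈ C the fidelity loss of the Petz-recovered state equals η(ψ) = 1 − ⟨ψ, ( Σ_{i,j} s(i) s(j)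 R_j E_i |ψ⟩⟨ψ| E_i† R_j† ) ψ⟩ = Σ_{i,j} s(i) s(j) ( ⟨ψ, Δ_{ij}† Δ_{ij} ψ⟩ − |⟨ψ, Δ_{ij} ψ⟩|² ). -/
open Matrix BigOperators
open scoped ComplexOrder

private lemma dotC {n : Type*} [Fintype n] (A : Matrix n n ℂ) (x y : n → ℂ) :
    star x ⬝ᵥ (Aᴴ *ᵥ y) = star (A *ᵥ x) ⬝ᵥ y := by
  rw [Matrix.dotProduct_mulVec, ← Matrix.star_mulVec]

private lemma conjDot {n : Type*} [Fintype n] (x y : n → ℂ) :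
    star (star x ⬝ᵥ y) = star y ⬝ᵥ x := by
  rw [star_dotProduct, star_star]

private lemma sumMulVec {n I : Type*} [Fintype n] [Fintype I]
    (M : I → Matrix n n ℂ) (v : n → ℂ) :
    (∑ i : I, M i) *ᵥ v = ∑ i : I, M i *ᵥ v := by
  ext x
  simp only [mulVec, dotProduct, Finset.sum_apply, Matrix.sum_apply, Finset.sum_mul]
  rw [Finset.sum_comm]

private lemma dotSum {n I : Type*} [Fintype n] [Fintype I] (u : I → n → ℂ) (v : n → ℂ) :
    v ⬝ᵥ (∑ i : I, u i) = ∑ i : I, v ⬝ᵥ u i := by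
  simp only [dotProduct, Finset.sum_apply, Finset.mul_sum]
  rw [Finset.sum_comm]

private lemma vmvMulVec {n : Type*} [Fintype n] (ψ u : n → ℂ) :
    (vecMulVec ψ (star ψ)) *ᵥ u = (star ψ ⬝ᵥ u) • ψ := by
  ext x
  simp only [vecMulVec, mulVec, dotProduct, Pi.smul_apply, of_apply, smul_eq_mul,
    Finset.sum_mul, Pi.star_apply]
  exact Finset.sum_congr rfl fun y _ => by ring

/-- Theorem 1, non-Markovian Petz recovery: the fidelity loss of the
Petz-recovered state equals
`Σ_{i,j} s i s j (⟨ψ, Δ_{ij}† Δ_{ij} ψ⟩ − |⟨ψ, Δ_{ij} ψ⟩|²)`. -/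
theorem nonMarkovian_petz_fidelity_loss
    {n I : Type*} [Fintype n] [DecidableEq n] [Fintype I]
    (P : Matrix n n ℂ) (hPherm : P.IsHermitian) (hPproj : P * P = P)
    (E : I → Matrix n n ℂ)
    (s : I → ℝ) (hs : ∀ i, s i = 1 ∨ s i = -1)
    (EP : Matrix n n ℂ)
    (hEPdef : EP = ∑ i : I, (s i : ℂ) • (E i * P * (E i)ᴴ))
    (hEP : EP.PosDef)
    (R : I → Matrix n n ℂ)
    (hR : ∀ i, R i = P * (E i)ᴴ * (hEP.posSemidef.sqrt)⁻¹)
    (β : I → I → ℂ) (Δ : I → I → Matrix n n ℂ)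
    (hΔsupp : ∀ i j, P * Δ i j * P = Δ i j)
    (hΔtr : ∀ i j, (Δ i j).trace = 0)
    (hAQEC : ∀ i j, P * (E i)ᴴ * (hEP.posSemidef.sqrt)⁻¹ * E j * P
        = β i j • P + Δ i j)
    (hcomp : ∑ i : I, ∑ j : I, ((s i : ℂ) * (s j : ℂ)) •
        (P * (E i)ᴴ * (R j)ᴴ * R j * E i * P) = P)
    (ψ : n → ℂ) (hψunit : star ψ ⬝ᵥ ψ = 1) (hψcode : P *ᵥ ψ = ψ) :
    1 - star ψ ⬝ᵥ
      ((∑ i : I, ∑ j : I, ((s i : ℂ) * (s j : ℂ)) •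
        (R j * E i * vecMulVec ψ (star ψ) * (E i)ᴴ * (R j)ᴴ)) *ᵥ ψ)
    = ∑ i : I, ∑ j : I, (s i : ℂ) * (s j : ℂ) *
        (star ψ ⬝ᵥ (((Δ i j)ᴴ * Δ i j) *ᵥ ψ)
          - ((‖star ψ ⬝ᵥ (Δ i j *ᵥ ψ)‖ ^ 2 : ℝ) : ℂ)) := by
  classical
  set α : I → I → ℂ := fun i j => star ψ ⬝ᵥ (Δ i j *ᵥ ψ) with hα
  set q : I → I → ℂ := fun i j => star ψ ⬝ᵥ (((Δ i j)ᴴ * Δ i j) *ᵥ ψ) with hq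
  set a : I → I → ℂ := fun i j => β j i + α j i with haa
  -- R j * E i * P = β j i • P + Δ j i
  have hN : ∀ i j, R j * E i * P = β j i • P + Δ j i := fun i j => by
    rw [hR j]; exact hAQEC j i
  have hNψ : ∀ i j, (R j * E i * P) *ᵥ ψ = β j i • ψ + Δ j i *ᵥ ψ := fun i j => by
    rw [hN i j, Matrix.add_mulVec, Matrix.smul_mulVec, hψcode]
  have haij : ∀ i j, star ψ ⬝ᵥ ((R j * E i) *ᵥ ψ) = a i j := by
    intro i j
    conv_lhs => rw [← hψcode, Matrix.mulVec_mulVec, hψcode, hNψ i j]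
    simp [dotProduct_add, dotProduct_smul, hψunit, haa, hα]
  -- value of the fidelity term
  have hT : ∀ i j, star ψ ⬝ᵥ ((R j * E i * vecMulVec ψ (star ψ) * (E i)ᴴ * (R j)ᴴ) *ᵥ ψ)
      = star (a i j) * a i j := by
    intro i j
    have h2 : ∀ A B C : Matrix n n ℂ, (A * (B * C)) *ᵥ ψ = A *ᵥ (B *ᵥ (C *ᵥ ψ)) := by
      intro A B C; simp [Matrix.mulVec_mulVec, Matrix.mul_assoc]
    have hmat : R j * E i * vecMulVec ψ (star ψ) * (E i)ᴴ * (R j)ᴴ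
        = (R j * E i) * (vecMulVec ψ (star ψ) * (R j * E i)ᴴ) := by
      rw [conjTranspose_mul]; simp only [Matrix.mul_assoc]
    rw [hmat, h2 (R j * E i) (vecMulVec ψ (star ψ)) ((R j * E i)ᴴ), vmvMulVec, dotC,
      show star ((R j * E i) *ᵥ ψ) ⬝ᵥ ψ = star (a i j) from by rw [← conjDot, haij i j],
      Matrix.mulVec_smul, dotProduct_smul, haij i j, smul_eq_mul]
  -- value of the completeness term
  have hS : ∀ i j, star ψ ⬝ᵥ ((P * (E i)ᴴ * (R j)ᴴ * R j * E i * P) *ᵥ ψ)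
      = star (a i j) * a i j - star (α j i) * α j i + q j i := by
    intro i j
    have hmat : P * (E i)ᴴ * (R j)ᴴ * R j * E i * P
        = (R j * E i * P)ᴴ * (R j * E i * P) := by
      rw [conjTranspose_mul, conjTranspose_mul, hPherm.eq]
      simp only [Matrix.mul_assoc]
    rw [hmat, ← Matrix.mulVec_mulVec, dotC, hNψ i j]
    have hu : star (Δ j i *ᵥ ψ) ⬝ᵥ ψ = star (α j i) := by rw [← conjDot]
    have huu : star (Δ j i *ᵥ ψ) ⬝ᵥ (Δ j i *ᵥ ψ) = q j i := by
      rw [← dotC, Matrix.mulVec_mulVec]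
    simp only [star_add, star_smul, add_dotProduct, dotProduct_add, smul_dotProduct,
      dotProduct_smul, hψunit, hu, huu, smul_eq_mul, mul_one]
    simp only [haa, hα, star_add]
    ring
  have hnorm : ∀ i j, ((‖α i j‖ ^ 2 : ℝ) : ℂ) = star (α i j) * α i j := fun i j => by
    rw [show (star (α i j) : ℂ) = (starRingEnd ℂ) (α i j) from rfl, Complex.conj_mul']
    push_cast; ring
  have hsum : ∀ F : I → I → Matrix n n ℂ,
      star ψ ⬝ᵥ ((∑ i : I, ∑ j : I, ((s i : ℂ) * (s j : ℂ)) • F i j) *ᵥ ψ)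
      = ∑ i : I, ∑ j : I, ((s i : ℂ) * (s j : ℂ)) * (star ψ ⬝ᵥ (F i j *ᵥ ψ)) := by
    intro F
    simp only [sumMulVec, dotSum, Matrix.smul_mulVec,
      dotProduct_smul, smul_eq_mul]
  have hcomp' := congrArg (fun M : Matrix n n ℂ => star ψ ⬝ᵥ (M *ᵥ ψ)) hcomp
  simp only [hsum, hψcode, hψunit, hS] at hcomp'
  rw [hsum]
  simp only [hT]
  rw [← hcomp']
  conv_rhs => rw [Finset.sum_comm]
  rw [← Finset.sum_sub_distrib]
  refine Finset.sum_congr rfl fun i _ => ?_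
  rw [← Finset.sum_sub_distrib]
  refine Finset.sum_congr rfl fun j _ => ?_
  rw [hnorm]
  ring
end

section
/- (Theorem 1, Markovian Petz recovery.) Let P be an orthogonal projection on a finite-dimensional complex Hilbert space H with codespace C = range(P), let {E_i}_{i∈I} be a finite family of noise operators with a sign function s : I → {+1,−1}, and let {R_j}_{j∈J} be a finite family of recovery operators (carrying no signs). Suppose there exist β_{ij} ∈ ℂ and operators Δ_{ij} with P Δ_{ij} P = Δ_{ij} and Tr(Δ_{ij}) = 0 such that R_j E_i P = P R_j E_i P = β_{ij} P + Δ_{ij} for all i ∈ I, j ∈ J, and suppose Σ_{i,j} s(i) P E_i† R_j† R_j E_i P = P. Then for every unit vector ψ ∈ C, the fidelity loss of the recovered state equals η(ψ) = 1 − ⟨ψ, ( Σ_{i,j} s(i) R_j E_i |ψ⟩⟨ψ| E_i† R_j† ) ψ⟩ = Σ_{i,j} s(i) ( ⟨ψ, Δ_{ij}† Δ_{ij} ψ⟩ − |⟨ψ, Δ_{ij} ψ⟩|² ). -/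
open Matrix BigOperators

private lemma aux_adj {n : Type*} [Fintype n] (A : Matrix n n ℂ) (u y : n → ℂ) :
    u ⬝ᵥ (Aᴴ *ᵥ y) = star (A *ᵥ star u) ⬝ᵥ y := by
  rw [dotProduct_mulVec, star_mulVec, star_star]

private lemma aux_conj {n : Type*} [Fintype n] (u v : n → ℂ) :
    star v ⬝ᵥ u = starRingEnd ℂ (star u ⬝ᵥ v) := by
  simp [dotProduct, map_sum, mul_comm]

private lemma aux_vmv {n : Type*} [Fintype n] (u v x : n → ℂ) :
    (vecMulVec u v) *ᵥ x = (v ⬝ᵥ x) • u := by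
  funext i
  simp only [vecMulVec, mulVec, dotProduct, Pi.smul_apply, smul_eq_mul,
    of_apply, Finset.sum_mul]
  exact Finset.sum_congr rfl fun k _ => by ring

private lemma aux_sum_mv {n K : Type*} [Fintype n] [Fintype K]
    (M : K → Matrix n n ℂ) (x : n → ℂ) :
    (∑ k, M k) *ᵥ x = ∑ k, M k *ᵥ x := by
  funext a
  simp only [mulVec, dotProduct, Matrix.sum_apply, Finset.sum_apply,
    Finset.sum_mul]
  rw [Finset.sum_comm]

private lemma aux_push {n K : Type*} [Fintype n] [Fintype K]
    (M : K → Matrix n n ℂ) (x y : n → ℂ) :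
    y ⬝ᵥ ((∑ k, M k) *ᵥ x) = ∑ k, y ⬝ᵥ (M k *ᵥ x) := by
  rw [aux_sum_mv]
  simp only [dotProduct, Finset.sum_apply, Finset.mul_sum]
  rw [Finset.sum_comm]

private lemma aux_norm (z : ℂ) : ((‖z‖ ^ 2 : ℝ) : ℂ) = starRingEnd ℂ z * z := by
  rw [mul_comm, Complex.mul_conj']; push_cast; ring

/-- Theorem 1, Markovian Petz recovery: for a recovery channel with
(unsigned) operators `R j` adapted only to the structure of the noise, satisfying
`R j * E i * P = β_{ij} P + Δ_{ij}` with `Δ_{ij}` traceless and supported on the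
codespace, together with the signed completeness relation on the codespace, the
fidelity loss of the recovered state equals
`Σ_{i,j} s i (⟨ψ, Δ_{ij}† Δ_{ij} ψ⟩ − |⟨ψ, Δ_{ij} ψ⟩|²)`. -/
theorem markovian_petz_fidelity_loss
    {n I J : Type*} [Fintype n] [DecidableEq n] [Fintype I] [Fintype J]
    (P : Matrix n n ℂ) (hPherm : P.IsHermitian) (hPproj : P * P = P)
    (E : I → Matrix n n ℂ)
    (s : I → ℝ) (hs : ∀ i, s i = 1 ∨ s i = -1)
    (R : J → Matrix n n ℂ)
    (β : I → J → ℂ) (Δ : I → J → Matrix n n ℂ)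
    (hΔsupp : ∀ i j, P * Δ i j * P = Δ i j)
    (hΔtr : ∀ i j, (Δ i j).trace = 0)
    (hcond : ∀ i j, R j * E i * P = β i j • P + Δ i j)
    (hcond' : ∀ i j, P * (R j * E i * P) = R j * E i * P)
    (hcomp : ∑ i : I, ∑ j : J, (s i : ℂ) •
        (P * (E i)ᴴ * (R j)ᴴ * R j * E i * P) = P)
    (ψ : n → ℂ) (hψunit : star ψ ⬝ᵥ ψ = 1) (hψcode : P *ᵥ ψ = ψ) :
    1 - star ψ ⬝ᵥ
      ((∑ i : I, ∑ j : J, (s i : ℂ) •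
        (R j * E i * vecMulVec ψ (star ψ) * (E i)ᴴ * (R j)ᴴ)) *ᵥ ψ)
    = ∑ i : I, ∑ j : J, (s i : ℂ) *
        (star ψ ⬝ᵥ (((Δ i j)ᴴ * Δ i j) *ᵥ ψ)
          - ((‖star ψ ⬝ᵥ (Δ i j *ᵥ ψ)‖ ^ 2 : ℝ) : ℂ)) := by
  classical
  -- image of ψ under the signed Kraus term
  have hv : ∀ i j, R j *ᵥ (E i *ᵥ ψ) = β i j • ψ + Δ i j *ᵥ ψ := by
    intro i j
    conv_lhs => rw [← hψcode]
    rw [mulVec_mulVec, mulVec_mulVec, hcond, add_mulVec, smul_mulVec, hψcode]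
  have hc : ∀ i j, star ψ ⬝ᵥ (R j *ᵥ (E i *ᵥ ψ))
      = β i j + star ψ ⬝ᵥ (Δ i j *ᵥ ψ) := by
    intro i j
    rw [hv, dotProduct_add, dotProduct_smul, hψunit, smul_eq_mul, mul_one]
  -- per-term value of the recovered-state fidelity contribution
  have hterm : ∀ i j, star ψ ⬝ᵥ
      ((R j * E i * vecMulVec ψ (star ψ) * (E i)ᴴ * (R j)ᴴ) *ᵥ ψ)
      = starRingEnd ℂ (β i j + star ψ ⬝ᵥ (Δ i j *ᵥ ψ))
        * (β i j + star ψ ⬝ᵥ (Δ i j *ᵥ ψ)) := by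
    intro i j
    have h1 : star ψ ⬝ᵥ ((E i)ᴴ *ᵥ ((R j)ᴴ *ᵥ ψ))
        = starRingEnd ℂ (β i j + star ψ ⬝ᵥ (Δ i j *ᵥ ψ)) := by
      rw [aux_adj, star_star, aux_adj, star_star, aux_conj, hc]
    calc star ψ ⬝ᵥ ((R j * E i * vecMulVec ψ (star ψ) * (E i)ᴴ * (R j)ᴴ) *ᵥ ψ)
        = star ψ ⬝ᵥ (R j *ᵥ (E i *ᵥ (vecMulVec ψ (star ψ) *ᵥ
            ((E i)ᴴ *ᵥ ((R j)ᴴ *ᵥ ψ))))) := by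
          rw [mulVec_mulVec, mulVec_mulVec, mulVec_mulVec, mulVec_mulVec]
      _ = _ := by
          rw [aux_vmv, mulVec_smul, mulVec_smul, dotProduct_smul, smul_eq_mul,
            h1, hc]
  -- per-term value of the completeness contribution
  have haval : ∀ i j, star ψ ⬝ᵥ ((P * (E i)ᴴ * (R j)ᴴ * R j * E i * P) *ᵥ ψ)
      = starRingEnd ℂ (β i j + star ψ ⬝ᵥ (Δ i j *ᵥ ψ))
          * (β i j + star ψ ⬝ᵥ (Δ i j *ᵥ ψ))
        + (star ψ ⬝ᵥ (((Δ i j)ᴴ * Δ i j) *ᵥ ψ)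
          - starRingEnd ℂ (star ψ ⬝ᵥ (Δ i j *ᵥ ψ)) * (star ψ ⬝ᵥ (Δ i j *ᵥ ψ))) := by
    intro i j
    have h1 : P * (E i)ᴴ * (R j)ᴴ * R j * E i * P
        = (R j * E i * P)ᴴ * (R j * E i * P) := by
      simp only [conjTranspose_mul, hPherm.eq, Matrix.mul_assoc]
    have hv' : (R j * E i * P) *ᵥ ψ = β i j • ψ + Δ i j *ᵥ ψ := by
      rw [hcond, add_mulVec, smul_mulVec, hψcode]
    have h2 : star (Δ i j *ᵥ ψ) ⬝ᵥ (Δ i j *ᵥ ψ)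
        = star ψ ⬝ᵥ (((Δ i j)ᴴ * Δ i j) *ᵥ ψ) := by
      rw [← mulVec_mulVec, aux_adj, star_star]
    have h3 : star (Δ i j *ᵥ ψ) ⬝ᵥ ψ = starRingEnd ℂ (star ψ ⬝ᵥ (Δ i j *ᵥ ψ)) := by
      rw [aux_conj]
    rw [h1, ← mulVec_mulVec, aux_adj, star_star, hv']
    simp only [star_add, star_smul, add_dotProduct, dotProduct_add,
      smul_dotProduct, dotProduct_smul, smul_eq_mul, hψunit, h2, h3,
      starRingEnd_apply, map_add, star_add]
    ring
  -- completeness gives the value 1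
  have hone : (1 : ℂ) = ∑ i : I, ∑ j : J, (s i : ℂ) *
      (star ψ ⬝ᵥ ((P * (E i)ᴴ * (R j)ᴴ * R j * E i * P) *ᵥ ψ)) := by
    have h := congrArg (fun A : Matrix n n ℂ => star ψ ⬝ᵥ (A *ᵥ ψ)) hcomp
    rw [aux_push, hψcode, hψunit] at h
    rw [← h]
    refine Finset.sum_congr rfl fun i _ => ?_
    rw [aux_push]
    refine Finset.sum_congr rfl fun j _ => ?_
    rw [smul_mulVec, dotProduct_smul, smul_eq_mul]
  -- push the LHS sum through
  have hLHS : star ψ ⬝ᵥ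
      ((∑ i : I, ∑ j : J, (s i : ℂ) •
        (R j * E i * vecMulVec ψ (star ψ) * (E i)ᴴ * (R j)ᴴ)) *ᵥ ψ)
      = ∑ i : I, ∑ j : J, (s i : ℂ) *
          (starRingEnd ℂ (β i j + star ψ ⬝ᵥ (Δ i j *ᵥ ψ))
            * (β i j + star ψ ⬝ᵥ (Δ i j *ᵥ ψ))) := by
    rw [aux_push]
    refine Finset.sum_congr rfl fun i _ => ?_
    rw [aux_push]
    refine Finset.sum_congr rfl fun j _ => ?_
    rw [smul_mulVec, dotProduct_smul, smul_eq_mul, hterm]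
  rw [hLHS, hone, ← Finset.sum_sub_distrib]
  refine Finset.sum_congr rfl fun i _ => ?_
  rw [← Finset.sum_sub_distrib]
  refine Finset.sum_congr rfl fun j _ => ?_
  rw [haval, aux_norm]
  ring
end

section
/- (Lower bound for the Leung recovery exactly adapted to HPTP noise.) Let P be an orthogonal projection on a finite-dimensional complex Hilbert space H with codespace C = range(P). Let {E_l}_{l∈L} be a finite family of operators with sign function s : L → {+1,−1}, and suppose for each l there are: a unitary U_l, strictly positive reals p_l and λ_l, and a positive semidefinite operator π_l with P π_l P = π_l, such that E_l P = U_l ( √(λ_l p_l) P + π_l ) and P U_k† U_l P = δ_{kl} P for all k, l. Define the recovery operators R_k := P U_k†. Then for every unit vector ψ ∈ C: Σ_{k,l} s(k) s(l) |⟨ψ, R_k E_l ψ⟩|² = Σ_l ( √(λ_l p_l) + ⟨ψ, π_l ψ⟩ )² ≥ Σ_l λ_l p_l. -/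
open Matrix BigOperators
open scoped ComplexOrder

/-- Lower bound for the Leung recovery exactly adapted to HPTP noise:
with `E l P = U l (√(λ_l p_l) P + π_l)`, `P (U k)† (U l) P = δ_{kl} P` and recovery
operators `R k = P (U k)†`, for every unit code vector `ψ`:
`Σ_{k,l} s k s l |⟨ψ, R k E l ψ⟩|² = Σ_l (√(λ_l p_l) + ⟨ψ, π_l ψ⟩)² ≥ Σ_l λ_l p_l`. -/
theorem leung_nonMarkovian_lower_bound
    {n L : Type*} [Fintype n] [DecidableEq n] [Fintype L] [DecidableEq L]
    (P : Matrix n n ℂ) (hPherm : P.IsHermitian) (hPproj : P * P = P)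
    (E : L → Matrix n n ℂ)
    (s : L → ℝ) (hs : ∀ l, s l = 1 ∨ s l = -1)
    (U : L → Matrix n n ℂ) (hU : ∀ l, (U l)ᴴ * U l = 1)
    (p lam : L → ℝ) (hp : ∀ l, 0 < p l) (hlam : ∀ l, 0 < lam l)
    (π : L → Matrix n n ℂ)
    (hπ : ∀ l, (π l).PosSemidef) (hπsupp : ∀ l, P * π l * P = π l)
    (hpolar : ∀ l, E l * P
        = U l * (((Real.sqrt (lam l * p l) : ℝ) : ℂ) • P + π l))
    (hortho : ∀ k l, P * (U k)ᴴ * U l * P = if k = l then P else 0)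
    (R : L → Matrix n n ℂ) (hR : ∀ k, R k = P * (U k)ᴴ)
    (ψ : n → ℂ) (hψunit : star ψ ⬝ᵥ ψ = 1) (hψcode : P *ᵥ ψ = ψ) :
    (∑ k : L, ∑ l : L, s k * s l * ‖star ψ ⬝ᵥ ((R k * E l) *ᵥ ψ)‖ ^ 2
      = ∑ l : L, (Real.sqrt (lam l * p l) + (star ψ ⬝ᵥ (π l *ᵥ ψ)).re) ^ 2)
    ∧ ∑ l : L, (Real.sqrt (lam l * p l) + (star ψ ⬝ᵥ (π l *ᵥ ψ)).re) ^ 2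
      ≥ ∑ l : L, lam l * p l := by
  set c : L → ℝ := fun l => Real.sqrt (lam l * p l) with hc
  have hcnn : ∀ l, 0 ≤ c l := fun l => Real.sqrt_nonneg _
  -- positivity of the π expectation values
  have hx : ∀ l, 0 ≤ star ψ ⬝ᵥ (π l *ᵥ ψ) := fun l => (hπ l).dotProduct_mulVec_nonneg ψ
  have hxre : ∀ l, 0 ≤ (star ψ ⬝ᵥ (π l *ᵥ ψ)).re := by
    intro l
    have := hx l
    rw [Complex.le_def] at this
    simpa using this.1
  have hxim : ∀ l, (star ψ ⬝ᵥ (π l *ᵥ ψ)).im = 0 := by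
    intro l
    have := hx l
    rw [Complex.le_def] at this
    simpa using this.2.symm
  -- matrix identity
  have hmat : ∀ k l, R k * E l * P
      = if k = l then (((c l : ℝ) : ℂ) • P + π l) else 0 := by
    intro k l
    have h1 : R k * E l * P = P * (U k)ᴴ * (E l * P) := by
      rw [hR k, mul_assoc, mul_assoc]
    rw [h1, hpolar l]
    have h2 : P * (U k)ᴴ * (U l * (((c l : ℝ) : ℂ) • P + π l))
        = ((c l : ℝ) : ℂ) • (P * (U k)ᴴ * U l * P)
          + (P * (U k)ᴴ * U l * P) * (π l * P) := by
      conv_lhs => rw [← hπsupp l]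
      simp only [mul_add, mul_smul_comm, Matrix.mul_assoc]
    rw [h2, hortho k l]
    by_cases hkl : k = l
    · subst hkl
      simp only [if_pos rfl, if_true]
      rw [← Matrix.mul_assoc, hπsupp k]
    · simp [hkl]
  -- inner product values
  have key : ∀ k l, star ψ ⬝ᵥ ((R k * E l) *ᵥ ψ)
      = if k = l then (((c l : ℝ) : ℂ) + star ψ ⬝ᵥ (π l *ᵥ ψ)) else 0 := by
    intro k l
    have h1 : (R k * E l) *ᵥ ψ = (R k * E l * P) *ᵥ ψ := by
      conv_lhs => rw [← hψcode]
      rw [Matrix.mulVec_mulVec]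
    by_cases hkl : k = l
    · subst hkl
      rw [h1, hmat k k, if_pos rfl, if_pos rfl]
      simp [Matrix.add_mulVec, Matrix.smul_mulVec, hψcode, hψunit]
    · rw [h1, hmat k l, if_neg hkl, if_neg hkl]
      simp
  -- norms
  have hnorm : ∀ l, ‖(((c l : ℝ) : ℂ) + star ψ ⬝ᵥ (π l *ᵥ ψ))‖
      = c l + (star ψ ⬝ᵥ (π l *ᵥ ψ)).re := by
    intro l
    have : (((c l : ℝ) : ℂ) + star ψ ⬝ᵥ (π l *ᵥ ψ))
        = (((c l + (star ψ ⬝ᵥ (π l *ᵥ ψ)).re : ℝ)) : ℂ) := by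
      apply Complex.ext
      · simp
      · simp [hxim l]
    rw [this, Complex.norm_real, Real.norm_of_nonneg (add_nonneg (hcnn l) (hxre l))]
  have hsq : ∀ l, s l * s l = 1 := by
    intro l; rcases hs l with h | h <;> rw [h] <;> norm_num
  constructor
  · calc ∑ k : L, ∑ l : L, s k * s l * ‖star ψ ⬝ᵥ ((R k * E l) *ᵥ ψ)‖ ^ 2
        = ∑ k : L, (c k + (star ψ ⬝ᵥ (π k *ᵥ ψ)).re) ^ 2 := by
          refine Finset.sum_congr rfl fun k _ => ?_
          rw [Finset.sum_eq_single k]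
          · rw [key k k, if_pos rfl, hnorm k, hsq k, one_mul]
          · intro l _ hlk
            rw [key k l, if_neg (Ne.symm hlk)]
            simp
          · intro h; exact absurd (Finset.mem_univ k) h
      _ = ∑ l : L, (Real.sqrt (lam l * p l) + (star ψ ⬝ᵥ (π l *ᵥ ψ)).re) ^ 2 := rfl
  · refine Finset.sum_le_sum fun l _ => ?_
    have h1 : Real.sqrt (lam l * p l) ^ 2 = lam l * p l := by
      rw [Real.sq_sqrt (mul_nonneg (hlam l).le (hp l).le)]
    nlinarith [hxre l, hcnn l, h1]
end

section
/- Let H = (ℂ²)^{⊗5}, let g₁ = X⊗Z⊗Z⊗X⊗I, g₂ = I⊗X⊗Z⊗Z⊗X, g₃ = X⊗I⊗X⊗Z⊗Z, g₄ = Z⊗X⊗I⊗X⊗Z be the stabilizer generators of the [[5,1,3]] code, and let P_code := (1/16) Π_{i=1}^{4} (I + g_i). Define the logical codewords |0_L⟩ as the normalization of P_code |00000⟩ and |1_L⟩ as the normalization of P_code |11111⟩. Let γ ∈ [0,1] and E₀ := diag(1, √(1−γ)) acting on ℂ², and A := E₀^{⊗5}. Then ⟨0_L| A† A |0_L⟩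 = 1 − (5/2)γ + (5/2)γ² − (5/4)γ³ + (5/16)γ⁴ and ⟨1_L| A† A |1_L⟩ = 1 − (5/2)γ + (5/2)γ² − (5/4)γ³ + (5/16)γ⁴ − (1/16)γ⁵. In particular, for every γ ∈ (0,1] these two values differ, so the Knill–Laflamme condition P A† A P ∝ P fails for the no-damping Kraus operator A of the amplitude damping channel on the [[5,1,3]] code. -/
open Matrix BigOperators
open scoped Kronecker

namespace FiveQubitAD

/-- Pauli X. -/
def X : Matrix (Fin 2) (Fin 2) ℂ := !![0, 1; 1, 0]

/-- Pauli Z. -/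
def Z : Matrix (Fin 2) (Fin 2) ℂ := !![1, 0; 0, -1]

/-- Five-fold tensor (Kronecker) product of one-qubit operators. -/
def kron5 (A B C D E : Matrix (Fin 2) (Fin 2) ℂ) :
    Matrix (Fin 2 × Fin 2 × Fin 2 × Fin 2 × Fin 2)
           (Fin 2 × Fin 2 × Fin 2 × Fin 2 × Fin 2) ℂ :=
  A ⊗ₖ (B ⊗ₖ (C ⊗ₖ (D ⊗ₖ E)))

/-- Stabilizer generator `XZZXI`. -/
def g1 := kron5 X Z Z X 1
/-- Stabilizer generator `IXZZX`. -/
def g2 := kron5 1 X Z Z X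
/-- Stabilizer generator `XIXZZ`. -/
def g3 := kron5 X 1 X Z Z
/-- Stabilizer generator `ZXIXZ`. -/
def g4 := kron5 Z X 1 X Z

/-- Projector onto the `[[5,1,3]]` codespace. -/
noncomputable def Pcode :
    Matrix (Fin 2 × Fin 2 × Fin 2 × Fin 2 × Fin 2)
           (Fin 2 × Fin 2 × Fin 2 × Fin 2 × Fin 2) ℂ :=
  ((1 : ℂ) / 16) • ((1 + g1) * (1 + g2) * (1 + g3) * (1 + g4))

/-- The computational basis vector `|00000⟩`. -/
def v00000 : Fin 2 × Fin 2 × Fin 2 × Fin 2 × Fin 2 → ℂ :=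
  fun q => if q = (0, 0, 0, 0, 0) then 1 else 0

/-- The computational basis vector `|11111⟩`. -/
def v11111 : Fin 2 × Fin 2 × Fin 2 × Fin 2 × Fin 2 → ℂ :=
  fun q => if q = (1, 1, 1, 1, 1) then 1 else 0

/-- The logical codeword `|0_L⟩`: normalization of `Pcode |00000⟩`. -/
noncomputable def zeroL : Fin 2 × Fin 2 × Fin 2 × Fin 2 × Fin 2 → ℂ :=
  ((Real.sqrt ((star (Pcode *ᵥ v00000) ⬝ᵥ (Pcode *ᵥ v00000)).re) : ℂ))⁻¹ •
    (Pcode *ᵥ v00000)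

/-- The logical codeword `|1_L⟩`: normalization of `Pcode |11111⟩`. -/
noncomputable def oneL : Fin 2 × Fin 2 × Fin 2 × Fin 2 × Fin 2 → ℂ :=
  ((Real.sqrt ((star (Pcode *ᵥ v11111) ⬝ᵥ (Pcode *ᵥ v11111)).re) : ℂ))⁻¹ •
    (Pcode *ᵥ v11111)

/-- The no-damping Kraus operator of amplitude damping with strength `γ`. -/
noncomputable def E0 (γ : ℝ) : Matrix (Fin 2) (Fin 2) ℂ :=
  !![1, 0; 0, (Real.sqrt (1 - γ) : ℂ)]

/-- The no-damping Kraus operator of the five-qubit amplitude damping channel. -/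
noncomputable def A (γ : ℝ) := kron5 (E0 γ) (E0 γ) (E0 γ) (E0 γ) (E0 γ)

/-! ### Auxiliary machinery -/

def q0 : Fin 2 → ℂ := ![1, 0]
def q1 : Fin 2 → ℂ := ![0, 1]

def vec2 {m n : Type*} (a : m → ℂ) (b : n → ℂ) : m × n → ℂ := fun p => a p.1 * b p.2

def vec5 (a b c d e : Fin 2 → ℂ) : Fin 2 × Fin 2 × Fin 2 × Fin 2 × Fin 2 → ℂ :=
  vec2 a (vec2 b (vec2 c (vec2 d e)))

lemma kron_mulVec {m n : Type*} [Fintype m] [Fintype n]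
    (M : Matrix m m ℂ) (N : Matrix n n ℂ) (a : m → ℂ) (b : n → ℂ) :
    (M ⊗ₖ N) *ᵥ vec2 a b = vec2 (M *ᵥ a) (N *ᵥ b) := by
  funext p
  simp only [Matrix.mulVec, dotProduct, kroneckerMap_apply, Fintype.sum_prod_type, vec2]
  rw [Finset.sum_mul_sum]
  exact Finset.sum_congr rfl fun k _ => Finset.sum_congr rfl fun l _ => by ring

lemma kron5_mulVec (A B C D E : Matrix (Fin 2) (Fin 2) ℂ) (a b c d e : Fin 2 → ℂ) :
    kron5 A B C D E *ᵥ vec5 a b c d e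
      = vec5 (A *ᵥ a) (B *ᵥ b) (C *ᵥ c) (D *ᵥ d) (E *ᵥ e) := by
  simp only [kron5, vec5, kron_mulVec]

lemma dot_vec2 {m n : Type*} [Fintype m] [Fintype n] (a c : m → ℂ) (b d : n → ℂ) :
    star (vec2 a b) ⬝ᵥ vec2 c d = (star a ⬝ᵥ c) * (star b ⬝ᵥ d) := by
  simp only [dotProduct, vec2, Pi.star_apply, Fintype.sum_prod_type, star_mul']
  rw [Finset.sum_mul_sum]
  exact Finset.sum_congr rfl fun k _ => Finset.sum_congr rfl fun l _ => by ring

lemma dot_vec5 (a b c d e a' b' c' d' e' : Fin 2 → ℂ) :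
    star (vec5 a b c d e) ⬝ᵥ vec5 a' b' c' d' e'
      = (star a ⬝ᵥ a') * ((star b ⬝ᵥ b') * ((star c ⬝ᵥ c')
          * ((star d ⬝ᵥ d') * (star e ⬝ᵥ e')))) := by
  simp only [vec5, dot_vec2]

lemma vec2_neg_left {m n : Type*} (a : m → ℂ) (b : n → ℂ) :
    vec2 (-a) b = -vec2 a b := by funext p; simp [vec2]
lemma vec2_neg_right {m n : Type*} (a : m → ℂ) (b : n → ℂ) :
    vec2 a (-b) = -vec2 a b := by funext p; simp [vec2]
lemma vec2_smul_left {m n : Type*} (c : ℂ) (a : m → ℂ) (b : n → ℂ) :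
    vec2 (c • a) b = c • vec2 a b := by funext p; simp [vec2]; ring
lemma vec2_smul_right {m n : Type*} (c : ℂ) (a : m → ℂ) (b : n → ℂ) :
    vec2 a (c • b) = c • vec2 a b := by funext p; simp [vec2]; ring

@[simp] lemma vec5_neg1 (a b c d e : Fin 2 → ℂ) : vec5 (-a) b c d e = -vec5 a b c d e := by
  simp [vec5, vec2_neg_left]
@[simp] lemma vec5_neg2 (a b c d e : Fin 2 → ℂ) : vec5 a (-b) c d e = -vec5 a b c d e := by
  simp [vec5, vec2_neg_left, vec2_neg_right]
@[simp] lemma vec5_neg3 (a b c d e : Fin 2 → ℂ) : vec5 a b (-c) d e = -vec5 a b c d e := by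
  simp [vec5, vec2_neg_left, vec2_neg_right]
@[simp] lemma vec5_neg4 (a b c d e : Fin 2 → ℂ) : vec5 a b c (-d) e = -vec5 a b c d e := by
  simp [vec5, vec2_neg_left, vec2_neg_right]
@[simp] lemma vec5_neg5 (a b c d e : Fin 2 → ℂ) : vec5 a b c d (-e) = -vec5 a b c d e := by
  simp [vec5, vec2_neg_right]
@[simp] lemma vec5_smul1 (t : ℂ) (a b c d e : Fin 2 → ℂ) :
    vec5 (t • a) b c d e = t • vec5 a b c d e := by simp [vec5, vec2_smul_left]
@[simp] lemma vec5_smul2 (t : ℂ) (a b c d e : Fin 2 → ℂ) :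
    vec5 a (t • b) c d e = t • vec5 a b c d e := by simp [vec5, vec2_smul_left, vec2_smul_right]
@[simp] lemma vec5_smul3 (t : ℂ) (a b c d e : Fin 2 → ℂ) :
    vec5 a b (t • c) d e = t • vec5 a b c d e := by simp [vec5, vec2_smul_left, vec2_smul_right]
@[simp] lemma vec5_smul4 (t : ℂ) (a b c d e : Fin 2 → ℂ) :
    vec5 a b c (t • d) e = t • vec5 a b c d e := by simp [vec5, vec2_smul_left, vec2_smul_right]
@[simp] lemma vec5_smul5 (t : ℂ) (a b c d e : Fin 2 → ℂ) :
    vec5 a b c d (t • e) = t • vec5 a b c d e := by simp [vec5, vec2_smul_right]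

@[simp] lemma Xq0 : X *ᵥ q0 = q1 := by
  funext i; fin_cases i <;> simp [X, q0, q1, Matrix.mulVec, dotProduct, Fin.sum_univ_two]
@[simp] lemma Xq1 : X *ᵥ q1 = q0 := by
  funext i; fin_cases i <;> simp [X, q0, q1, Matrix.mulVec, dotProduct, Fin.sum_univ_two]
@[simp] lemma Zq0 : Z *ᵥ q0 = q0 := by
  funext i; fin_cases i <;> simp [Z, q0, Matrix.mulVec, dotProduct, Fin.sum_univ_two]
@[simp] lemma Zq1 : Z *ᵥ q1 = -q1 := by
  funext i; fin_cases i <;> simp [Z, q1, Matrix.mulVec, dotProduct, Fin.sum_univ_two]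

def Dm (t : ℂ) : Matrix (Fin 2) (Fin 2) ℂ := !![1, 0; 0, t]

@[simp] lemma Dq0 (t : ℂ) : Dm t *ᵥ q0 = q0 := by
  funext i; fin_cases i <;> simp [Dm, q0, Matrix.mulVec, dotProduct, Fin.sum_univ_two]
@[simp] lemma Dq1 (t : ℂ) : Dm t *ᵥ q1 = t • q1 := by
  funext i; fin_cases i <;> simp [Dm, q1, Matrix.mulVec, dotProduct, Fin.sum_univ_two]

@[simp] lemma d00 : star q0 ⬝ᵥ q0 = 1 := by simp [q0, dotProduct, Fin.sum_univ_two]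
@[simp] lemma d01 : star q0 ⬝ᵥ q1 = 0 := by simp [q0, q1, dotProduct, Fin.sum_univ_two]
@[simp] lemma d10 : star q1 ⬝ᵥ q0 = 0 := by simp [q0, q1, dotProduct, Fin.sum_univ_two]
@[simp] lemma d11 : star q1 ⬝ᵥ q1 = 1 := by simp [q1, dotProduct, Fin.sum_univ_two]

lemma kron_conjT {m n : Type*} [Fintype m] [Fintype n]
    (M : Matrix m m ℂ) (N : Matrix n n ℂ) : (M ⊗ₖ N)ᴴ = Mᴴ ⊗ₖ Nᴴ := by
  ext ⟨i,j⟩ ⟨k,l⟩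
  simp [conjTranspose_apply, kroneckerMap_apply, star_mul']

lemma kron5_conjT (A B C D E : Matrix (Fin 2) (Fin 2) ℂ) :
    (kron5 A B C D E)ᴴ = kron5 Aᴴ Bᴴ Cᴴ Dᴴ Eᴴ := by
  simp only [kron5, kron_conjT]

lemma kron5_mul (A B C D E A' B' C' D' E' : Matrix (Fin 2) (Fin 2) ℂ) :
    kron5 A B C D E * kron5 A' B' C' D' E'
      = kron5 (A*A') (B*B') (C*C') (D*D') (E*E') := by
  simp only [kron5, Matrix.mul_kronecker_mul]

@[simp] lemma XconjT : Xᴴ = X := by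
  ext i j; fin_cases i <;> fin_cases j <;> simp [X]
@[simp] lemma ZconjT : Zᴴ = Z := by
  ext i j; fin_cases i <;> fin_cases j <;> simp [Z]

def W : Matrix (Fin 2) (Fin 2) ℂ := !![0, -1; 1, 0]
@[simp] lemma XmulX : X * X = 1 := by
  simp [X, Matrix.mul_fin_two]; rw [← Matrix.one_fin_two]
@[simp] lemma ZmulZ : Z * Z = 1 := by
  simp [Z, Matrix.mul_fin_two]; rw [← Matrix.one_fin_two]
@[simp] lemma XmulZ : X * Z = W := by simp [X, Z, W, Matrix.mul_fin_two]
@[simp] lemma ZmulX : Z * X = -W := by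
  simp [X, Z, W, Matrix.mul_fin_two]

@[simp] lemma kron5_neg1 (A B C D E : Matrix (Fin 2) (Fin 2) ℂ) :
    kron5 (-A) B C D E = -kron5 A B C D E := by
  ext ⟨i,a,b,c,d⟩ ⟨k,e,f,g,h⟩; simp [kron5, kroneckerMap_apply]
@[simp] lemma kron5_neg2 (A B C D E : Matrix (Fin 2) (Fin 2) ℂ) :
    kron5 A (-B) C D E = -kron5 A B C D E := by
  ext ⟨i,a,b,c,d⟩ ⟨k,e,f,g,h⟩; simp [kron5, kroneckerMap_apply]
@[simp] lemma kron5_neg3 (A B C D E : Matrix (Fin 2) (Fin 2) ℂ) :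
    kron5 A B (-C) D E = -kron5 A B C D E := by
  ext ⟨i,a,b,c,d⟩ ⟨k,e,f,g,h⟩; simp [kron5, kroneckerMap_apply]
@[simp] lemma kron5_neg4 (A B C D E : Matrix (Fin 2) (Fin 2) ℂ) :
    kron5 A B C (-D) E = -kron5 A B C D E := by
  ext ⟨i,a,b,c,d⟩ ⟨k,e,f,g,h⟩; simp [kron5, kroneckerMap_apply]
@[simp] lemma kron5_neg5 (A B C D E : Matrix (Fin 2) (Fin 2) ℂ) :
    kron5 A B C D (-E) = -kron5 A B C D E := by
  ext ⟨i,a,b,c,d⟩ ⟨k,e,f,g,h⟩; simp [kron5, kroneckerMap_apply]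

lemma comm12 : g1 * g2 = g2 * g1 := by simp [g1, g2, kron5_mul]
lemma comm13 : g1 * g3 = g3 * g1 := by simp [g1, g3, kron5_mul]
lemma comm14 : g1 * g4 = g4 * g1 := by simp [g1, g4, kron5_mul]
lemma comm23 : g2 * g3 = g3 * g2 := by simp [g2, g3, kron5_mul]
lemma comm24 : g2 * g4 = g4 * g2 := by simp [g2, g4, kron5_mul]
lemma comm34 : g3 * g4 = g4 * g3 := by simp [g3, g4, kron5_mul]

lemma g1H : g1ᴴ = g1 := by simp [g1, kron5_conjT]
lemma g2H : g2ᴴ = g2 := by simp [g2, kron5_conjT]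
lemma g3H : g3ᴴ = g3 := by simp [g3, kron5_conjT]
lemma g4H : g4ᴴ = g4 := by simp [g4, kron5_conjT]

/-! ### Explicit codewords -/

noncomputable def F0 : Fin 2 × Fin 2 × Fin 2 × Fin 2 × Fin 2 → ℂ :=
  vec5 q0 q0 q0 q0 q0
    - vec5 q0 q0 q0 q1 q1
    + vec5 q0 q0 q1 q0 q1
    - vec5 q0 q0 q1 q1 q0
    + vec5 q0 q1 q0 q0 q1
    + vec5 q0 q1 q0 q1 q0
    - vec5 q0 q1 q1 q0 q0
    - vec5 q0 q1 q1 q1 q1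
    - vec5 q1 q0 q0 q0 q1
    + vec5 q1 q0 q0 q1 q0
    + vec5 q1 q0 q1 q0 q0
    - vec5 q1 q0 q1 q1 q1
    - vec5 q1 q1 q0 q0 q0
    - vec5 q1 q1 q0 q1 q1
    - vec5 q1 q1 q1 q0 q1
    - vec5 q1 q1 q1 q1 q0

noncomputable def F1 : Fin 2 × Fin 2 × Fin 2 × Fin 2 × Fin 2 → ℂ :=
  -vec5 q0 q0 q0 q0 q1
    - vec5 q0 q0 q0 q1 q0
    - vec5 q0 q0 q1 q0 q0
    - vec5 q0 q0 q1 q1 q1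
    - vec5 q0 q1 q0 q0 q0
    + vec5 q0 q1 q0 q1 q1
    + vec5 q0 q1 q1 q0 q1
    - vec5 q0 q1 q1 q1 q0
    - vec5 q1 q0 q0 q0 q0
    - vec5 q1 q0 q0 q1 q1
    + vec5 q1 q0 q1 q0 q1
    + vec5 q1 q0 q1 q1 q0
    - vec5 q1 q1 q0 q0 q1
    + vec5 q1 q1 q0 q1 q0
    - vec5 q1 q1 q1 q0 q0
    + vec5 q1 q1 q1 q1 q1

lemma hv0 : v00000 = vec5 q0 q0 q0 q0 q0 := by
  funext ⟨a,b,c,d,e⟩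
  fin_cases a <;> fin_cases b <;> fin_cases c <;> fin_cases d <;> fin_cases e <;>
    simp [v00000, vec5, vec2, q0, q1]

lemma hv1 : v11111 = vec5 q1 q1 q1 q1 q1 := by
  funext ⟨a,b,c,d,e⟩
  fin_cases a <;> fin_cases b <;> fin_cases c <;> fin_cases d <;> fin_cases e <;>
    simp [v11111, vec5, vec2, q0, q1]

lemma hu0 : Pcode *ᵥ v00000 = (1/16 : ℂ) • F0 := by
  rw [hv0]
  unfold Pcode g1 g2 g3 g4 F0
  simp only [← Matrix.mulVec_mulVec, Matrix.smul_mulVec, Matrix.add_mulVec,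
    Matrix.one_mulVec, Matrix.mulVec_add, Matrix.mulVec_neg, kron5_mulVec,
    Xq0, Xq1, Zq0, Zq1, Matrix.one_mulVec,
    vec5_neg1, vec5_neg2, vec5_neg3, vec5_neg4, vec5_neg5, neg_neg]
  norm_num
  module

lemma hu1 : Pcode *ᵥ v11111 = (1/16 : ℂ) • F1 := by
  rw [hv1]
  unfold Pcode g1 g2 g3 g4 F1
  simp only [← Matrix.mulVec_mulVec, Matrix.smul_mulVec, Matrix.add_mulVec,
    Matrix.one_mulVec, Matrix.mulVec_add, Matrix.mulVec_neg, kron5_mulVec,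
    Xq0, Xq1, Zq0, Zq1, Matrix.one_mulVec,
    vec5_neg1, vec5_neg2, vec5_neg3, vec5_neg4, vec5_neg5, neg_neg]
  norm_num
  module


lemma dotF0 (t : ℂ) :
    star F0 ⬝ᵥ (kron5 (Dm t) (Dm t) (Dm t) (Dm t) (Dm t) *ᵥ F0)
      = 1 + 10 * t^2 + 5 * t^4 := by
  unfold F0
  simp only [Matrix.mulVec_add, Matrix.mulVec_sub, Matrix.mulVec_neg, Matrix.mulVec_smul,
    kron5_mulVec, Dq0, Dq1, vec5_smul1, vec5_smul2, vec5_smul3, vec5_smul4, vec5_smul5,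
    star_add, star_sub, star_neg, smul_neg,
    dotProduct_add, add_dotProduct, dotProduct_sub,
    sub_dotProduct, dotProduct_neg, neg_dotProduct,
    dotProduct_smul, smul_dotProduct,
    dot_vec5, d00, d01, d10, d11, smul_eq_mul]
  ring

lemma dotF1 (t : ℂ) :
    star F1 ⬝ᵥ (kron5 (Dm t) (Dm t) (Dm t) (Dm t) (Dm t) *ᵥ F1)
      = 5 * t + 10 * t^3 + t^5 := by
  unfold F1
  simp only [Matrix.mulVec_add, Matrix.mulVec_sub, Matrix.mulVec_neg, Matrix.mulVec_smul,
    kron5_mulVec, Dq0, Dq1, vec5_smul1, vec5_smul2, vec5_smul3, vec5_smul4, vec5_smul5,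
    star_add, star_sub, star_neg, smul_neg,
    dotProduct_add, add_dotProduct, dotProduct_sub,
    sub_dotProduct, dotProduct_neg, neg_dotProduct,
    dotProduct_smul, smul_dotProduct,
    dot_vec5, d00, d01, d10, d11, smul_eq_mul]
  ring

lemma normF0 : star F0 ⬝ᵥ F0 = 16 := by
  unfold F0
  simp only [star_add, star_sub, star_neg,
    dotProduct_add, add_dotProduct, dotProduct_sub,
    sub_dotProduct, dotProduct_neg, neg_dotProduct,
    dot_vec5, d00, d01, d10, d11]
  ring

lemma normF1 : star F1 ⬝ᵥ F1 = 16 := by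
  unfold F1
  simp only [star_add, star_sub, star_neg,
    dotProduct_add, add_dotProduct, dotProduct_sub,
    sub_dotProduct, dotProduct_neg, neg_dotProduct,
    dot_vec5, d00, d01, d10, d11]
  ring

lemma g1F0 : g1 *ᵥ F0 = F0 := by
  unfold g1 F0
  simp only [Matrix.mulVec_add, Matrix.mulVec_sub, Matrix.mulVec_neg, kron5_mulVec,
    Xq0, Xq1, Zq0, Zq1, Matrix.one_mulVec,
    vec5_neg1, vec5_neg2, vec5_neg3, vec5_neg4, vec5_neg5, neg_neg]
  module
lemma g2F0 : g2 *ᵥ F0 = F0 := by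
  unfold g2 F0
  simp only [Matrix.mulVec_add, Matrix.mulVec_sub, Matrix.mulVec_neg, kron5_mulVec,
    Xq0, Xq1, Zq0, Zq1, Matrix.one_mulVec,
    vec5_neg1, vec5_neg2, vec5_neg3, vec5_neg4, vec5_neg5, neg_neg]
  module
lemma g3F0 : g3 *ᵥ F0 = F0 := by
  unfold g3 F0
  simp only [Matrix.mulVec_add, Matrix.mulVec_sub, Matrix.mulVec_neg, kron5_mulVec,
    Xq0, Xq1, Zq0, Zq1, Matrix.one_mulVec,
    vec5_neg1, vec5_neg2, vec5_neg3, vec5_neg4, vec5_neg5, neg_neg]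
  module
lemma g4F0 : g4 *ᵥ F0 = F0 := by
  unfold g4 F0
  simp only [Matrix.mulVec_add, Matrix.mulVec_sub, Matrix.mulVec_neg, kron5_mulVec,
    Xq0, Xq1, Zq0, Zq1, Matrix.one_mulVec,
    vec5_neg1, vec5_neg2, vec5_neg3, vec5_neg4, vec5_neg5, neg_neg]
  module
lemma g1F1 : g1 *ᵥ F1 = F1 := by
  unfold g1 F1
  simp only [Matrix.mulVec_add, Matrix.mulVec_sub, Matrix.mulVec_neg, kron5_mulVec,
    Xq0, Xq1, Zq0, Zq1, Matrix.one_mulVec,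
    vec5_neg1, vec5_neg2, vec5_neg3, vec5_neg4, vec5_neg5, neg_neg]
  module
lemma g2F1 : g2 *ᵥ F1 = F1 := by
  unfold g2 F1
  simp only [Matrix.mulVec_add, Matrix.mulVec_sub, Matrix.mulVec_neg, kron5_mulVec,
    Xq0, Xq1, Zq0, Zq1, Matrix.one_mulVec,
    vec5_neg1, vec5_neg2, vec5_neg3, vec5_neg4, vec5_neg5, neg_neg]
  module
lemma g3F1 : g3 *ᵥ F1 = F1 := by
  unfold g3 F1
  simp only [Matrix.mulVec_add, Matrix.mulVec_sub, Matrix.mulVec_neg, kron5_mulVec,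
    Xq0, Xq1, Zq0, Zq1, Matrix.one_mulVec,
    vec5_neg1, vec5_neg2, vec5_neg3, vec5_neg4, vec5_neg5, neg_neg]
  module
lemma g4F1 : g4 *ᵥ F1 = F1 := by
  unfold g4 F1
  simp only [Matrix.mulVec_add, Matrix.mulVec_sub, Matrix.mulVec_neg, kron5_mulVec,
    Xq0, Xq1, Zq0, Zq1, Matrix.one_mulVec,
    vec5_neg1, vec5_neg2, vec5_neg3, vec5_neg4, vec5_neg5, neg_neg]
  module

lemma PF0 : Pcode *ᵥ F0 = F0 := by
  unfold Pcode
  simp only [← Matrix.mulVec_mulVec, Matrix.smul_mulVec, Matrix.add_mulVec,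
    Matrix.one_mulVec, Matrix.mulVec_add, g1F0, g2F0, g3F0, g4F0]
  module

lemma PF1 : Pcode *ᵥ F1 = F1 := by
  unfold Pcode
  simp only [← Matrix.mulVec_mulVec, Matrix.smul_mulVec, Matrix.add_mulVec,
    Matrix.one_mulVec, Matrix.mulVec_add, g1F1, g2F1, g3F1, g4F1]
  module


lemma commAdd {a b : Matrix (Fin 2 × Fin 2 × Fin 2 × Fin 2 × Fin 2)
    (Fin 2 × Fin 2 × Fin 2 × Fin 2 × Fin 2) ℂ} (h : a * b = b * a) :
    Commute (1 + a) (1 + b) :=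
  Commute.add_left (Commute.one_left (1 + b))
    (Commute.add_right (Commute.one_right a) h)

lemma PcodeH : Pcodeᴴ = Pcode := by
  have C12 : Commute (1 + g1) (1 + g2) := commAdd comm12
  have C13 : Commute (1 + g1) (1 + g3) := commAdd comm13
  have C23 : Commute (1 + g2) (1 + g3) := commAdd comm23
  have C14 : Commute (1 + g1) (1 + g4) := commAdd comm14
  have C24 : Commute (1 + g2) (1 + g4) := commAdd comm24
  have C34 : Commute (1 + g3) (1 + g4) := commAdd comm34
  have C3 : Commute (1 + g3) ((1 + g1) * (1 + g2)) :=
    Commute.mul_right C13.symm C23.symm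
  have C4 : Commute (1 + g4) ((1 + g1) * (1 + g2) * (1 + g3)) :=
    Commute.mul_right (Commute.mul_right C14.symm C24.symm) C34.symm
  unfold Pcode
  rw [Matrix.conjTranspose_smul]
  congr 1
  · simp
  · rw [Matrix.conjTranspose_mul, Matrix.conjTranspose_mul, Matrix.conjTranspose_mul]
    simp only [Matrix.conjTranspose_add, Matrix.conjTranspose_one, g1H, g2H, g3H, g4H]
    calc (1 + g4) * ((1 + g3) * ((1 + g2) * (1 + g1)))
        = (1 + g4) * ((1 + g3) * ((1 + g1) * (1 + g2))) := by rw [← C12.eq]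
      _ = (1 + g4) * ((1 + g1) * (1 + g2) * (1 + g3)) := by rw [C3.eq]
      _ = (1 + g1) * (1 + g2) * (1 + g3) * (1 + g4) := by rw [C4.eq]

/-- values of `⟨0_L| A†A |0_L⟩` and `⟨1_L| A†A |1_L⟩` for the
`[[5,1,3]]` code under the no-damping Kraus operator `A = E₀^{⊗5}` of the
amplitude damping channel; for `γ ∈ (0,1]` they differ, so the Knill–Laflamme
condition `P A†A P ∝ P` fails. -/
theorem fiveQubit_KL_failure (γ : ℝ) (hγ0 : 0 ≤ γ) (hγ1 : γ ≤ 1) :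
    (star zeroL ⬝ᵥ (((A γ)ᴴ * A γ) *ᵥ zeroL)
      = 1 - (5 / 2) * (γ : ℂ) + (5 / 2) * (γ : ℂ) ^ 2
          - (5 / 4) * (γ : ℂ) ^ 3 + (5 / 16) * (γ : ℂ) ^ 4)
    ∧ (star oneL ⬝ᵥ (((A γ)ᴴ * A γ) *ᵥ oneL)
      = 1 - (5 / 2) * (γ : ℂ) + (5 / 2) * (γ : ℂ) ^ 2
          - (5 / 4) * (γ : ℂ) ^ 3 + (5 / 16) * (γ : ℂ) ^ 4
          - (1 / 16) * (γ : ℂ) ^ 5)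
    ∧ (0 < γ →
        star zeroL ⬝ᵥ (((A γ)ᴴ * A γ) *ᵥ zeroL)
          ≠ star oneL ⬝ᵥ (((A γ)ᴴ * A γ) *ᵥ oneL))
    ∧ (0 < γ →
        ¬ ∃ c : ℂ, Pcode * ((A γ)ᴴ * A γ) * Pcode = c • Pcode) := by
  have hnn : (0:ℝ) ≤ 1 - γ := by linarith
  set t : ℂ := ((1 - γ : ℝ) : ℂ) with htdef
  have hteq : t = 1 - (γ : ℂ) := by rw [htdef]; push_cast; ring
  have hsqrt : ((Real.sqrt (1-γ) : ℝ) : ℂ) * ((Real.sqrt (1-γ) : ℝ) : ℂ) = t := by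
    rw [← Complex.ofReal_mul, Real.mul_self_sqrt hnn, htdef]
  have hE : (E0 γ)ᴴ * E0 γ = Dm t := by
    ext i j
    fin_cases i <;> fin_cases j <;>
      simp [E0, Dm, Matrix.mul_apply, Fin.sum_univ_two, Matrix.conjTranspose_apply,
        Complex.star_def, Complex.conj_ofReal, hsqrt]
  have hAA : (A γ)ᴴ * A γ = kron5 (Dm t) (Dm t) (Dm t) (Dm t) (Dm t) := by
    unfold A; rw [kron5_conjT, kron5_mul, hE]
  -- normalizations
  have hd0 : star (Pcode *ᵥ v00000) ⬝ᵥ (Pcode *ᵥ v00000) = ((1/16 : ℝ) : ℂ) := by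
    rw [hu0]
    simp only [star_smul, smul_dotProduct, dotProduct_smul, normF0, smul_eq_mul]
    simp [Complex.star_def]
  have hd1 : star (Pcode *ᵥ v11111) ⬝ᵥ (Pcode *ᵥ v11111) = ((1/16 : ℝ) : ℂ) := by
    rw [hu1]
    simp only [star_smul, smul_dotProduct, dotProduct_smul, normF1, smul_eq_mul]
    simp [Complex.star_def]
  have hsq0 : Real.sqrt ((star (Pcode *ᵥ v00000) ⬝ᵥ (Pcode *ᵥ v00000)).re) = 1/4 := by
    rw [hd0, Complex.ofReal_re, show (1/16 : ℝ) = (1/4)^2 by norm_num,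
      Real.sqrt_sq (by norm_num)]
  have hsq1 : Real.sqrt ((star (Pcode *ᵥ v11111) ⬝ᵥ (Pcode *ᵥ v11111)).re) = 1/4 := by
    rw [hd1, Complex.ofReal_re, show (1/16 : ℝ) = (1/4)^2 by norm_num,
      Real.sqrt_sq (by norm_num)]
  have hz : zeroL = (1/4 : ℂ) • F0 := by
    rw [zeroL, hsq0, hu0, smul_smul]
    norm_num
  have ho : oneL = (1/4 : ℂ) • F1 := by
    rw [oneL, hsq1, hu1, smul_smul]
    norm_num
  have key0 : star zeroL ⬝ᵥ (((A γ)ᴴ * A γ) *ᵥ zeroL)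
      = (1/16) * (1 + 10*t^2 + 5*t^4) := by
    rw [hz, hAA]
    simp only [star_smul, Matrix.mulVec_smul, smul_dotProduct,
      dotProduct_smul, dotF0, smul_eq_mul]
    simp [Complex.star_def]
    ring
  have key1 : star oneL ⬝ᵥ (((A γ)ᴴ * A γ) *ᵥ oneL)
      = (1/16) * (5*t + 10*t^3 + t^5) := by
    rw [ho, hAA]
    simp only [star_smul, Matrix.mulVec_smul, smul_dotProduct,
      dotProduct_smul, dotF1, smul_eq_mul]
    simp [Complex.star_def]
    ring
  have E0eq : star zeroL ⬝ᵥ (((A γ)ᴴ * A γ) *ᵥ zeroL)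
      = 1 - (5 / 2) * (γ : ℂ) + (5 / 2) * (γ : ℂ) ^ 2
          - (5 / 4) * (γ : ℂ) ^ 3 + (5 / 16) * (γ : ℂ) ^ 4 := by
    rw [key0, hteq]; ring
  have E1eq : star oneL ⬝ᵥ (((A γ)ᴴ * A γ) *ᵥ oneL)
      = 1 - (5 / 2) * (γ : ℂ) + (5 / 2) * (γ : ℂ) ^ 2
          - (5 / 4) * (γ : ℂ) ^ 3 + (5 / 16) * (γ : ℂ) ^ 4
          - (1 / 16) * (γ : ℂ) ^ 5 := by
    rw [key1, hteq]; ring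
  have hne : 0 < γ →
      star zeroL ⬝ᵥ (((A γ)ᴴ * A γ) *ᵥ zeroL)
        ≠ star oneL ⬝ᵥ (((A γ)ᴴ * A γ) *ᵥ oneL) := by
    intro hp h
    have hzero : (1/16 : ℂ) * (γ : ℂ)^5 = 0 := by
      linear_combination h - E0eq + E1eq
    have hγ : (γ : ℂ) ≠ 0 := Complex.ofReal_ne_zero.mpr (ne_of_gt hp)
    simp [pow_eq_zero_iff, hγ] at hzero
  refine ⟨E0eq, E1eq, hne, ?_⟩
  rintro hp ⟨c, hc⟩
  have hfix0 : Pcode *ᵥ zeroL = zeroL := by rw [hz, Matrix.mulVec_smul, PF0]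
  have hfix1 : Pcode *ᵥ oneL = oneL := by rw [ho, Matrix.mulVec_smul, PF1]
  have hrow0 : star zeroL ᵥ* Pcode = star zeroL := by
    calc star zeroL ᵥ* Pcode = star zeroL ᵥ* Pcodeᴴ := by rw [PcodeH]
      _ = star (Pcode *ᵥ zeroL) := (Matrix.star_mulVec _ _).symm
      _ = star zeroL := by rw [hfix0]
  have hrow1 : star oneL ᵥ* Pcode = star oneL := by
    calc star oneL ᵥ* Pcode = star oneL ᵥ* Pcodeᴴ := by rw [PcodeH]
      _ = star (Pcode *ᵥ oneL) := (Matrix.star_mulVec _ _).symm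
      _ = star oneL := by rw [hfix1]
  have norm0 : star zeroL ⬝ᵥ zeroL = 1 := by
    rw [hz]
    simp only [star_smul, smul_dotProduct, dotProduct_smul, normF0, smul_eq_mul]
    simp [Complex.star_def]
    norm_num
  have norm1 : star oneL ⬝ᵥ oneL = 1 := by
    rw [ho]
    simp only [star_smul, smul_dotProduct, dotProduct_smul, normF1, smul_eq_mul]
    simp [Complex.star_def]
    norm_num
  have hval0 : c = star zeroL ⬝ᵥ (((A γ)ᴴ * A γ) *ᵥ zeroL) := by
    have h1 : star zeroL ⬝ᵥ ((Pcode * ((A γ)ᴴ * A γ) * Pcode) *ᵥ zeroL)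
        = star zeroL ⬝ᵥ (((A γ)ᴴ * A γ) *ᵥ zeroL) := by
      rw [← Matrix.mulVec_mulVec, hfix0, ← Matrix.mulVec_mulVec,
        Matrix.dotProduct_mulVec, hrow0]
    have h2 : star zeroL ⬝ᵥ ((Pcode * ((A γ)ᴴ * A γ) * Pcode) *ᵥ zeroL) = c := by
      rw [hc, Matrix.smul_mulVec, dotProduct_smul, hfix0, norm0,
        smul_eq_mul, mul_one]
    rw [← h2, h1]
  have hval1 : c = star oneL ⬝ᵥ (((A γ)ᴴ * A γ) *ᵥ oneL) := by
    have h1 : star oneL ⬝ᵥ ((Pcode * ((A γ)ᴴ * A γ) * Pcode) *ᵥ oneL)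
        = star oneL ⬝ᵥ (((A γ)ᴴ * A γ) *ᵥ oneL) := by
      rw [← Matrix.mulVec_mulVec, hfix1, ← Matrix.mulVec_mulVec,
        Matrix.dotProduct_mulVec, hrow1]
    have h2 : star oneL ⬝ᵥ ((Pcode * ((A γ)ᴴ * A γ) * Pcode) *ᵥ oneL) = c := by
      rw [hc, Matrix.smul_mulVec, dotProduct_smul, hfix1, norm1,
        smul_eq_mul, mul_one]
    rw [← h2, h1]
  exact hne hp (by rw [← hval0, ← hval1])

end FiveQubitAD
end

section
/- Let Γ₀ > 0 and b > 2Γ₀, and set d := √(b² − 2Γ₀ b) > 0. Define G : ℝ → ℝ by G(t) = e^{−bt/2} ( cosh(dt/2) + (b/d) sinh(dt/2) ). Then G(0) = 1 and for every t ≥ 0 the derivative of G satisfies the memory-kernel integro-differential equation G′(t) = − ∫₀ᵗ f(t − τ) G(τ) dτ, where f(s) := (Γ₀ b / 2) e^{−b s}. -/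
open scoped BigOperators

private lemma hde (c x : ℝ) : HasDerivAt (fun y => Real.exp (c * y)) (c * Real.exp (c * x)) x := by
  simpa [mul_comm, Function.comp_def] using (Real.hasDerivAt_exp (c * x)).comp x ((hasDerivAt_id x).const_mul c)

private lemma hds (c x : ℝ) : HasDerivAt (fun y => Real.sinh (c * y)) (c * Real.cosh (c * x)) x := by
  simpa [mul_comm, Function.comp_def] using (Real.hasDerivAt_sinh (c * x)).comp x ((hasDerivAt_id x).const_mul c)

private lemma hdc (c x : ℝ) : HasDerivAt (fun y => Real.cosh (c * y)) (c * Real.sinh (c * x)) x := by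
  simpa [mul_comm, Function.comp_def] using (Real.hasDerivAt_cosh (c * x)).comp x ((hasDerivAt_id x).const_mul c)

private lemma key_algebra (Γ₀ b d E S C : ℝ) (hdne : d ≠ 0)
    (hdsq : d ^ 2 = b ^ 2 - 2 * Γ₀ * b) :
    -(Γ₀ * b / d) * (E * S) = -b / 2 * E * (C + b / d * S) + E * (d / 2 * S + b / d * (d / 2 * C)) := by
  field_simp
  linear_combination (-E * S) * hdsq

private lemma key_algebra2 (K E S C d b : ℝ) (hdne : d ≠ 0) :
    K * (E * (C + b / d * S)) = K * (2 / d * (b / 2 * E * S + E * (d / 2 * C))) := by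
  field_simp
  ring

/-- For `Γ₀ > 0`, `b > 2Γ₀` and `d = √(b² − 2Γ₀ b) > 0`, the function
`G(t) = e^{−bt/2} (cosh(dt/2) + (b/d) sinh(dt/2))` satisfies `G(0) = 1` and, for every
`t ≥ 0`, the memory-kernel integro-differential equation
`G′(t) = − ∫₀ᵗ f(t − τ) G(τ) dτ` with kernel `f(s) = (Γ₀ b / 2) e^{−b s}`. -/
theorem damped_JC_solution (Γ₀ b : ℝ) (hΓ₀ : 0 < Γ₀) (hb : 2 * Γ₀ < b)
    (d : ℝ) (hd : d = Real.sqrt (b ^ 2 - 2 * Γ₀ * b))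
    (G : ℝ → ℝ)
    (hG : ∀ t : ℝ, G t = Real.exp (-(b * t) / 2) *
      (Real.cosh (d * t / 2) + (b / d) * Real.sinh (d * t / 2)))
    (f : ℝ → ℝ) (hf : ∀ s : ℝ, f s = Γ₀ * b / 2 * Real.exp (-(b * s))) :
    0 < d ∧ G 0 = 1 ∧
      ∀ t : ℝ, 0 ≤ t →
        HasDerivAt G (-(∫ τ in (0 : ℝ)..t, f (t - τ) * G τ)) t := by
  have hb0 : 0 < b := by linarith
  have hpos : 0 < b ^ 2 - 2 * Γ₀ * b := by nlinarith
  have hd0 : 0 < d := by rw [hd]; exact Real.sqrt_pos.mpr hpos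
  have hdsq : d ^ 2 = b ^ 2 - 2 * Γ₀ * b := by rw [hd, Real.sq_sqrt hpos.le]
  have hdne : d ≠ 0 := ne_of_gt hd0
  refine ⟨hd0, by simp [hG 0], ?_⟩
  intro t ht
  -- explicit derivative of G
  have hG' : HasDerivAt G
      (-(Γ₀ * b / d) * (Real.exp (-b / 2 * t) * Real.sinh (d / 2 * t))) t := by
    have hfun : G = fun τ => Real.exp (-b / 2 * τ) *
        (Real.cosh (d / 2 * τ) + b / d * Real.sinh (d / 2 * τ)) := by
      funext τ; rw [hG τ]; ring_nf
    rw [hfun]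
    have h1 := (hde (-b / 2) t).mul
      ((hdc (d / 2) t).add ((hds (d / 2) t).const_mul (b / d)))
    exact h1.congr_deriv (key_algebra Γ₀ b d _ _ _ hdne hdsq).symm
  -- compute the integral
  have hInt : (∫ τ in (0 : ℝ)..t, f (t - τ) * G τ)
      = Γ₀ * b / d * (Real.exp (-b / 2 * t) * Real.sinh (d / 2 * t)) := by
    have hcong : ∀ τ ∈ Set.uIcc (0 : ℝ) t, f (t - τ) * G τ =
        Γ₀ * b / 2 * Real.exp (-(b * t)) *
          (Real.exp (b / 2 * τ) * (Real.cosh (d / 2 * τ) + b / d * Real.sinh (d / 2 * τ))) := by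
      intro τ _
      rw [hf, hG]
      have e1 : Real.exp (-(b * (t - τ))) * Real.exp (-(b * τ) / 2)
          = Real.exp (-(b * t)) * Real.exp (b / 2 * τ) := by
        rw [← Real.exp_add, ← Real.exp_add]; congr 1; ring
      have e2 : Real.cosh (d * τ / 2) = Real.cosh (d / 2 * τ) := by ring_nf
      have e3 : Real.sinh (d * τ / 2) = Real.sinh (d / 2 * τ) := by ring_nf
      rw [e2, e3]
      linear_combination (Γ₀ * b / 2 *
        (Real.cosh (d / 2 * τ) + b / d * Real.sinh (d / 2 * τ))) * e1
    rw [intervalIntegral.integral_congr hcong]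
    have hF : ∀ τ ∈ Set.uIcc (0 : ℝ) t,
        HasDerivAt (fun τ => Γ₀ * b / 2 * Real.exp (-(b * t)) *
            (2 / d * (Real.exp (b / 2 * τ) * Real.sinh (d / 2 * τ))))
          (Γ₀ * b / 2 * Real.exp (-(b * t)) *
            (Real.exp (b / 2 * τ) * (Real.cosh (d / 2 * τ) + b / d * Real.sinh (d / 2 * τ)))) τ := by
      intro τ _
      have h2 := (((hde (b / 2) τ).mul (hds (d / 2) τ)).const_mul (2 / d)).const_mul
        (Γ₀ * b / 2 * Real.exp (-(b * t)))
      exact h2.congr_deriv (key_algebra2 _ _ _ _ _ _ hdne).symm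
    have hci : IntervalIntegrable (fun τ => Γ₀ * b / 2 * Real.exp (-(b * t)) *
        (Real.exp (b / 2 * τ) * (Real.cosh (d / 2 * τ) + b / d * Real.sinh (d / 2 * τ))))
        MeasureTheory.volume 0 t := by
      apply Continuous.intervalIntegrable
      fun_prop
    rw [intervalIntegral.integral_eq_sub_of_hasDerivAt hF hci]
    have e1 : Real.exp (-(b * t)) * Real.exp (b / 2 * t) = Real.exp (-b / 2 * t) := by
      rw [← Real.exp_add]; congr 1; ring
    simp only [mul_zero, Real.sinh_zero, Real.exp_zero]
    linear_combination (Γ₀ * b / d * Real.sinh (d / 2 * t)) * e1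
  rw [show -(∫ τ in (0 : ℝ)..t, f (t - τ) * G τ)
      = -(Γ₀ * b / d) * (Real.exp (-b / 2 * t) * Real.sinh (d / 2 * t)) by rw [hInt]; ring]
  exact hG'
end
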